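/- arXiv:1710.02713 — 4 statements merged into one kernel-verified Lean document; each statement's English description precedes it below -/
import Mathlib

section
/- Let ⟨κₙ : n < ω⟩ be an increasing sequence of regular cardinals with ⟨κₙ⟩ ∈ M, where M is the limit of an IA chain of regular uncountable length δ and |M| < κ₀. Then every function in ∏ₙ(M ∩ κₙ) is pointwise dominated by a function in M ∩ ∏ₙ κₙ; hence M is tight for ⟨κₙ⟩. -/
/-!
The countably many values of `g` lie in one stage `M i` because `cf δ > ω`. The IA coding puts
`⟨M i' : i' ≤ i⟩`, hence `M i` itself, into `M (i + 1)`, so `n ↦ sup (M i ∩ κ n)` is first-order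
definable from parameters in `M` and therefore lies in `M` by elementarity. It stays below `κ n`
because `|M i| < κ 0 ≤ κ n = cf (κ n)`.
-/

open FirstOrder

/-- The relation symbols of the language of set theory: a single binary relation. -/
inductive memRel : ℕ → Type
  | mem : memRel 2

/-- The language of set theory, with a single binary relation `∈`. -/
def memLang : FirstOrder.Language := ⟨fun _ => Empty, memRel⟩

/-- `ZFSet` as a structure in the language of set theory. -/
noncomputable instance : memLang.Structure ZFSet where
  funMap := fun e _ => e.elim
  RelMap | .mem => fun x => x 0 ∈ x 1

namespace FirstOrder.Language.Formula

variable {L : Language} {M : Type*} [L.Structure M] {α : Type*} [DecidableEq α]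

private def bindVar (x : α) (a : α) : α ⊕ Unit := if a = x then Sum.inr () else Sum.inl a

private lemma elim_bindVar (v : α → M) (x : α) (i : Unit → M) :
    (Sum.elim v i ∘ bindVar x) = Function.update v x (i ()) := by
  funext a
  by_cases h : a = x
  · subst h; simp [bindVar]
  · simp [bindVar, h]

noncomputable def exVar (x : α) (φ : L.Formula α) : L.Formula α :=
  (φ.relabel (bindVar x)).iExs Unit

noncomputable def allVar (x : α) (φ : L.Formula α) : L.Formula α :=
  (φ.relabel (bindVar x)).iAlls Unit

@[simp] theorem realize_exVar {x : α} {φ : L.Formula α} {v : α → M} :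
    (exVar x φ).Realize v ↔ ∃ y, φ.Realize (Function.update v x y) := by
  simp only [exVar, realize_iExs, realize_relabel, elim_bindVar]
  exact ⟨fun ⟨i, h⟩ => ⟨i (), h⟩, fun ⟨y, h⟩ => ⟨fun _ => y, h⟩⟩

@[simp] theorem realize_allVar {x : α} {φ : L.Formula α} {v : α → M} :
    (allVar x φ).Realize v ↔ ∀ y, φ.Realize (Function.update v x y) := by
  simp only [allVar, realize_iAlls, realize_relabel, elim_bindVar]
  exact ⟨fun h y => h fun _ => y, fun h i => h (i ())⟩

end FirstOrder.Language.Formula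

namespace FirstOrder.Language.ElementarySubstructure

variable {L : Language} {M : Type*} [L.Structure M] {α : Type*} [DecidableEq α]

theorem mem_of_realize_update_iff (S : L.ElementarySubstructure M) (φ : L.Formula α) (x : α)
    {v : α → M} (hv : ∀ a, v a ∈ S) {z : M} (hz : ∀ y, φ.Realize (Function.update v x y) ↔ y = z) :
    z ∈ S := by
  let w : α → S := fun a => ⟨v a, hv a⟩
  have hexN : (Formula.exVar x φ).Realize (S.subtype ∘ w) := by
    simpa using ⟨z, (hz z).2 rfl⟩
  obtain ⟨y, hy⟩ := Formula.realize_exVar.1 ((S.subtype.map_formula _ w).1 hexN)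
  rw [← S.subtype.map_formula, Function.comp_update] at hy
  rw [← (hz _).1 hy]
  exact y.2

end FirstOrder.Language.ElementarySubstructure

namespace memLang

open FirstOrder.Language Formula

def mem {α : Type*} (x y : α) : memLang.Formula α :=
  Relations.formula₂ (memRel.mem : memLang.Relations 2) (Term.var x) (Term.var y)

@[simp] theorem realize_mem {α : Type*} {x y : α} {v : α → ZFSet} :
    (mem x y).Realize v ↔ v x ∈ v y :=
  Iff.rfl

def equal {α : Type*} (x y : α) : memLang.Formula α := (Term.var x).equal (Term.var y)

@[simp] theorem realize_equal {α : Type*} {x y : α} {v : α → ZFSet} :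
    (equal x y).Realize v ↔ v x = v y := by
  simp [equal]

/-- The bound variables are chosen above `q`, `a`, `b`, so none of them is captured. -/
noncomputable def pair (q a b : ℕ) : memLang.Formula ℕ :=
  let t := max q (max a b) + 1
  let r := t + 1
  allVar t (mem t q ⇔
    (allVar r (mem r t ⇔ equal r a) ⊔ allVar r (mem r t ⇔ equal r a ⊔ equal r b)))

@[simp] theorem realize_pair {q a b : ℕ} {v : ℕ → ZFSet} :
    (pair q a b).Realize v ↔ v q = ZFSet.pair (v a) (v b) := by
  have : q ≠ max q (max a b) + 1 ∧ a ≠ max q (max a b) + 1 ∧ b ≠ max q (max a b) + 1 ∧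
      a ≠ max q (max a b) + 1 + 1 ∧ b ≠ max q (max a b) + 1 + 1 := by omega
  have h1 (t : ZFSet) : (∀ r, r ∈ t ↔ r = v a) ↔ t = {v a} := by simp [ZFSet.ext_iff]
  have h2 (t : ZFSet) : (∀ r, r ∈ t ↔ r = v a ∨ r = v b) ↔ t = {v a, v b} := by
    simp [ZFSet.ext_iff]
  simp [pair, this, h1, h2, ZFSet.ext_iff (x := v q), ZFSet.pair]

-- In these formulas variable `0` is the set being defined and `1`, `2` are parameters.
noncomputable def sndUnion : memLang.Formula ℕ :=
  allVar 3 (mem 3 0 ⇔ exVar 4 (exVar 5 (exVar 6 (mem 4 1 ⊓ pair 4 5 6 ⊓ mem 3 6))))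

theorem realize_sndUnion {v : ℕ → ZFSet} :
    sndUnion.Realize v ↔ ∀ y, y ∈ v 0 ↔ ∃ a x, ZFSet.pair a x ∈ v 1 ∧ y ∈ x := by
  simp [sndUnion]

noncomputable def supGraph : memLang.Formula ℕ :=
  allVar 3 (mem 3 0 ⇔ exVar 4 (exVar 5 (exVar 6 (exVar 7 (mem 4 2 ⊓ pair 4 5 6 ⊓ pair 3 5 7 ⊓
    allVar 8 (mem 8 7 ⇔ exVar 9 (mem 9 6 ⊓ mem 9 1 ⊓ (mem 8 9 ⊔ equal 8 9))))))))

theorem realize_supGraph {v : ℕ → ZFSet} :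
    supGraph.Realize v ↔ ∀ p, p ∈ v 0 ↔ ∃ a k u, ZFSet.pair a k ∈ v 2 ∧ p = ZFSet.pair a u ∧
      ∀ w, w ∈ u ↔ ∃ y ∈ k, y ∈ v 1 ∧ (w ∈ y ∨ w = y) := by
  simp [supGraph, and_assoc]

section

variable {S : memLang.ElementarySubstructure ZFSet}

theorem sndUnion_mem {s W : ZFSet} (hs : s ∈ S)
    (hW : ∀ y, y ∈ W ↔ ∃ a x, ZFSet.pair a x ∈ s ∧ y ∈ x) : W ∈ S := by
  refine S.mem_of_realize_update_iff sndUnion 0 (v := fun _ => s) (fun _ => hs) fun y => ?_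
  simp [realize_sndUnion, ZFSet.ext_iff (y := W), hW]

theorem supGraph_mem {W c g : ZFSet} (hW : W ∈ S) (hc : c ∈ S)
    (hg : ∀ p, p ∈ g ↔ ∃ a k u, ZFSet.pair a k ∈ c ∧ p = ZFSet.pair a u ∧
      ∀ w, w ∈ u ↔ ∃ y ∈ k, y ∈ W ∧ (w ∈ y ∨ w = y)) : g ∈ S := by
  refine S.mem_of_realize_update_iff supGraph 0 (v := fun n => if n = 1 then W else c)
    (fun n => by split_ifs <;> assumption) fun y => ?_
  simp [realize_supGraph, ZFSet.ext_iff (y := g), hg]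

end

end memLang

universe u

def IsVonNeumannOrdinalMap (vnOrd : Ordinal.{u} → ZFSet.{u}) : Prop :=
  ∀ α x, x ∈ vnOrd α ↔ ∃ β < α, x = vnOrd β

namespace IsVonNeumannOrdinalMap

variable {vnOrd : Ordinal.{u} → ZFSet.{u}}

theorem mem_of_lt (hvn : IsVonNeumannOrdinalMap vnOrd) {α β : Ordinal} (h : α < β) :
    vnOrd α ∈ vnOrd β :=
  (hvn β _).2 ⟨α, h, rfl⟩

theorem injective (hvn : IsVonNeumannOrdinalMap vnOrd) : Function.Injective vnOrd := by
  intro α β h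
  by_contra hne
  rcases lt_or_gt_of_ne hne with hlt | hlt
  · have hmem := hvn.mem_of_lt hlt
    rw [h] at hmem
    exact ZFSet.mem_irrefl _ hmem
  · have hmem := hvn.mem_of_lt hlt
    rw [← h] at hmem
    exact ZFSet.mem_irrefl _ hmem

end IsVonNeumannOrdinalMap

/-- The paper's `sup (A ∩ o)`, taken strictly so that it strictly dominates every element. -/
noncomputable def strictSupIn (vnOrd : Ordinal.{u} → ZFSet.{u}) (A : Set ZFSet.{u})
    (o : Ordinal.{u}) : Ordinal.{u} :=
  ⨆ α : {α : Ordinal // α < o ∧ vnOrd α ∈ A}, α.1 + 1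

section strictSupIn

variable {vnOrd : Ordinal.{u} → ZFSet.{u}} {A : Set ZFSet.{u}} {o : Ordinal.{u}}

theorem strictSupIn_bddAbove_range :
    BddAbove (Set.range fun α : {α : Ordinal // α < o ∧ vnOrd α ∈ A} => α.1 + 1) :=
  ⟨o, by rintro _ ⟨α, rfl⟩; exact Order.add_one_le_of_lt α.2.1⟩

theorem lt_strictSupIn {α : Ordinal} (hα : α < o) (hA : vnOrd α ∈ A) :
    α < strictSupIn vnOrd A o :=
  (Order.lt_add_one_iff.2 le_rfl).trans_le
    (le_ciSup strictSupIn_bddAbove_range (⟨α, hα, hA⟩ : {α : Ordinal // α < o ∧ vnOrd α ∈ A}))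

theorem strictSupIn_lt_ord (hinj : Function.Injective vnOrd) {c : Cardinal.{u}}
    (hc : c.IsRegular) (hA : Cardinal.mk A < Cardinal.lift.{u + 1} c) :
    strictSupIn vnOrd A c.ord < c.ord := by
  refine Ordinal.lift_iSup_add_one_lt_of_lt_cof ?_ fun α => α.2.1
  have hcard : Cardinal.mk {α : Ordinal // α < c.ord ∧ vnOrd α ∈ A} ≤ Cardinal.mk A :=
    Cardinal.mk_le_of_injective (f := fun α => (⟨vnOrd α.1, α.2.2⟩ : A))
      fun α β h => Subtype.ext (hinj (congrArg Subtype.val h))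
  rw [Cardinal.lift_id'.{u, u + 1}, Cardinal.lift_ord, hc.lift.cof_ord]
  exact hcard.trans_lt hA

theorem mem_vnOrd_strictSupIn_iff (hvn : IsVonNeumannOrdinalMap vnOrd) {w : ZFSet} :
    w ∈ vnOrd (strictSupIn vnOrd A o) ↔ ∃ y ∈ vnOrd o, y ∈ A ∧ (w ∈ y ∨ w = y) := by
  rw [hvn, strictSupIn]
  constructor
  · rintro ⟨β, hβ, rfl⟩
    obtain ⟨⟨α, hαo, hαA⟩, hβα⟩ := (lt_ciSup_iff' strictSupIn_bddAbove_range).1 hβ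
    refine ⟨vnOrd α, hvn.mem_of_lt hαo, hαA, ?_⟩
    rcases (Order.lt_add_one_iff.1 hβα).lt_or_eq with hlt | rfl
    · exact Or.inl (hvn.mem_of_lt hlt)
    · exact Or.inr rfl
  · rintro ⟨y, hy, hyA, hwy⟩
    obtain ⟨α, hαo, rfl⟩ := (hvn o y).1 hy
    have hα : α < strictSupIn vnOrd A o := lt_strictSupIn hαo hyA
    rcases hwy with hw | rfl
    · obtain ⟨β, hβ, rfl⟩ := (hvn α w).1 hw
      exact ⟨β, hβ.trans hα, rfl⟩
    · exact ⟨α, hα, rfl⟩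

end strictSupIn

theorem exists_stage_forall_mem {X : Type*} {δ : Ordinal.{u}} (hδ : Cardinal.aleph0 < δ.cof)
    (M : Ordinal.{u} → Set X) (hmono : ∀ i j, i ≤ j → j < δ → M i ⊆ M j) {x : ℕ → X}
    (hx : ∀ n, ∃ j < δ, x n ∈ M j) : ∃ i < δ, ∀ n, x n ∈ M i := by
  choose j hjδ hxj using hx
  have hiδ : ⨆ n, j n < δ := Ordinal.lift_iSup_lt_of_lt_cof (by simpa using hδ) hjδ
  exact ⟨⨆ n, j n, hiδ, fun n => hmono _ _ (Ordinal.le_iSup j n) hiδ (hxj n)⟩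

theorem mem_iff_exists_pair_mem_of_monotone {c Z : Ordinal.{u} → ZFSet.{u}} {i : Ordinal.{u}}
    {s : ZFSet.{u}} (hmono : ∀ i' ≤ i, Z i' ⊆ Z i)
    (hs : ∀ x, x ∈ s ↔ ∃ i' < i + 1, x = ZFSet.pair (c i') (Z i')) (y : ZFSet.{u}) :
    y ∈ Z i ↔ ∃ a x, ZFSet.pair a x ∈ s ∧ y ∈ x := by
  constructor
  · intro hy
    exact ⟨c i, Z i, (hs _).2 ⟨i, Order.lt_add_one_iff.2 le_rfl, rfl⟩, hy⟩
  · rintro ⟨a, x, has, hy⟩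
    obtain ⟨i', hi', hpair⟩ := (hs _).1 has
    obtain ⟨-, rfl⟩ := ZFSet.pair_injective hpair
    exact hmono i' (Order.lt_add_one_iff.1 hi') hy

theorem mem_range_pair_strictSupIn_iff {vnOrd : Ordinal.{u} → ZFSet.{u}}
    (hvn : IsVonNeumannOrdinalMap vnOrd) {A : Set ZFSet.{u}} {W : ZFSet.{u}}
    (hW : ∀ y, y ∈ W ↔ y ∈ A) {o : ℕ → Ordinal.{u}} {c : ZFSet.{u}}
    (hc : ∀ x, x ∈ c ↔ ∃ n : ℕ, x = ZFSet.pair (vnOrd n) (vnOrd (o n))) (p : ZFSet.{u}) :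
    p ∈ ZFSet.range (fun n : ℕ => ZFSet.pair (vnOrd n) (vnOrd (strictSupIn vnOrd A (o n)))) ↔
      ∃ a k u, ZFSet.pair a k ∈ c ∧ p = ZFSet.pair a u ∧
        ∀ w, w ∈ u ↔ ∃ y ∈ k, y ∈ W ∧ (w ∈ y ∨ w = y) := by
  have hsup (n : ℕ) (w : ZFSet) : w ∈ vnOrd (strictSupIn vnOrd A (o n)) ↔
      ∃ y ∈ vnOrd (o n), y ∈ W ∧ (w ∈ y ∨ w = y) := by
    simp only [mem_vnOrd_strictSupIn_iff hvn, hW]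
  rw [ZFSet.mem_range]
  constructor
  · rintro ⟨n, rfl⟩
    exact ⟨_, _, _, (hc _).2 ⟨n, rfl⟩, rfl, hsup n⟩
  · rintro ⟨a, k, u, hak, rfl, hu⟩
    obtain ⟨n, hn⟩ := (hc _).1 hak
    obtain ⟨rfl, rfl⟩ := ZFSet.pair_injective hn
    exact ⟨n, congrArg _ (ZFSet.ext fun w => by rw [hsup, hu])⟩

theorem IA_limit_tight_general
    (d : Cardinal) (hd : d.IsRegular) (hdunc : Cardinal.aleph0 < d)
    (δ : Ordinal) (hδ : δ = d.ord)
    (vnOrd : Ordinal → ZFSet)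
    (hvn : ∀ α x, x ∈ vnOrd α ↔ ∃ β < α, x = vnOrd β)
    (M : Ordinal → memLang.ElementarySubstructure ZFSet)
    (memZ : Ordinal → ZFSet)
    (hmemZ : ∀ i, ∀ x : ZFSet, x ∈ memZ i ↔ x ∈ M i)
    (hmono : ∀ i j, i ≤ j → j < δ → (M i : Set ZFSet) ⊆ (M j : Set ZFSet))
    (hIA : ∀ j < δ, (∃ j', j = j' + 1) →
      ∃ s : ZFSet, s ∈ M j ∧
        ∀ x : ZFSet, (x ∈ s ↔ ∃ i < j, x = ZFSet.pair (vnOrd i) (memZ i)))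
    (κ : ℕ → Cardinal) (hreg : ∀ n, (κ n).IsRegular) (hmonoκ : StrictMono κ)
    (hcard : Cardinal.mk {x : ZFSet | ∃ j < δ, x ∈ M j} < Cardinal.lift.{1, 0} (κ 0))
    (hκM : ∃ s : ZFSet, (∃ j < δ, s ∈ M j) ∧
      ∀ x : ZFSet, (x ∈ s ↔ ∃ n : ℕ, x = ZFSet.pair (vnOrd n) (vnOrd (κ n).ord))) :
    ∀ g : ℕ → Ordinal,
      (∀ n, g n < (κ n).ord ∧ ∃ j < δ, vnOrd (g n) ∈ M j) →
      ∃ f : ℕ → Ordinal, (∀ n, f n < (κ n).ord) ∧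
        (∃ sf : ZFSet, (∃ j < δ, sf ∈ M j) ∧
          ∀ x : ZFSet, (x ∈ sf ↔ ∃ n : ℕ, x = ZFSet.pair (vnOrd n) (vnOrd (f n)))) ∧
        ∀ n, g n < f n := by
  intro g hg
  have hvn' : IsVonNeumannOrdinalMap vnOrd := hvn
  obtain ⟨i, hiδ, hgi⟩ := exists_stage_forall_mem (by rwa [hδ, hd.cof_ord])
    (fun i => (M i : Set ZFSet)) hmono fun n => (hg n).2
  have hi1δ : i + 1 < δ := by
    rw [hδ] at hiδ ⊢
    exact (Cardinal.isSuccLimit_ord hd.aleph0_le).add_one_lt hiδ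
  obtain ⟨s, hsM, hs⟩ := hIA (i + 1) hi1δ ⟨i, rfl⟩
  obtain ⟨c, ⟨j₀, hj₀δ, hcM⟩, hc⟩ := hκM
  have hjδ : max j₀ (i + 1) < δ := max_lt hj₀δ hi1δ
  have hZ : memZ i ∈ M (max j₀ (i + 1)) := by
    refine hmono _ _ (le_max_right _ _) hjδ (memLang.sndUnion_mem hsM fun y => ?_)
    refine mem_iff_exists_pair_mem_of_monotone (fun i' hi' y hy => ?_) hs y
    exact (hmemZ i y).2 (hmono i' i hi' hiδ ((hmemZ i' y).1 hy))
  have hMi (n : ℕ) : Cardinal.mk (M i : Set ZFSet) < Cardinal.lift.{1} (κ n) :=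
    calc Cardinal.mk (M i : Set ZFSet)
        ≤ Cardinal.mk {x : ZFSet | ∃ j < δ, x ∈ M j} :=
          Cardinal.mk_le_mk_of_subset fun x hx => ⟨i, hiδ, hx⟩
      _ < Cardinal.lift.{1} (κ 0) := hcard
      _ ≤ Cardinal.lift.{1} (κ n) := Cardinal.lift_le.2 (hmonoκ.monotone n.zero_le)
  refine ⟨fun n => strictSupIn vnOrd (M i) (κ n).ord,
    fun n => strictSupIn_lt_ord hvn'.injective (hreg n) (hMi n),
    ⟨_, ⟨_, hjδ, memLang.supGraph_mem hZ (hmono _ _ (le_max_left _ _) hjδ hcM)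
      (mem_range_pair_strictSupIn_iff hvn' (hmemZ i) hc)⟩, fun x => ?_⟩,
    fun n => lt_strictSupIn (hg n).1 (hgi n)⟩
  simp only [ZFSet.mem_range, eq_comm]

/-- if `M` is the limit of an IA chain of regular uncountable length `δ`,
`|M| < κ₀` and the increasing sequence of regular cardinals `⟨κₙ⟩` belongs to `M`, then
every function in `∏ₙ (M ∩ κₙ)` is pointwise dominated by a function (coded) in
`M ∩ ∏ₙ κₙ`; hence `M` is tight for `⟨κₙ⟩`. -/
theorem IA_limit_tight
    (d : Cardinal) (hd : d.IsRegular) (hdunc : Cardinal.aleph0 < d)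
    (δ : Ordinal) (hδ : δ = d.ord)
    (vnOrd : Ordinal → ZFSet)
    (hvn : ∀ α x, x ∈ vnOrd α ↔ ∃ β < α, x = vnOrd β)
    (M : Ordinal → memLang.ElementarySubstructure ZFSet)
    (memZ : Ordinal → ZFSet)
    (hmemZ : ∀ i, ∀ x : ZFSet, x ∈ memZ i ↔ x ∈ M i)
    (hmono : ∀ i j, i ≤ j → j < δ → (M i : Set ZFSet) ⊆ (M j : Set ZFSet))
    (hcont : ∀ j < δ, Order.IsSuccLimit j → ∀ x : ZFSet, (x ∈ M j ↔ ∃ i < j, x ∈ M i))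
    (hIA : ∀ j < δ, (∃ j', j = j' + 1) →
      ∃ s : ZFSet, s ∈ M j ∧
        ∀ x : ZFSet, (x ∈ s ↔ ∃ i < j, x = ZFSet.pair (vnOrd i) (memZ i)))
    (κ : ℕ → Cardinal) (hreg : ∀ n, (κ n).IsRegular) (hmonoκ : StrictMono κ)
    (hcard : Cardinal.mk {x : ZFSet | ∃ j < δ, x ∈ M j} < Cardinal.lift.{1, 0} (κ 0))
    (hκM : ∃ s : ZFSet, (∃ j < δ, s ∈ M j) ∧
      ∀ x : ZFSet, (x ∈ s ↔ ∃ n : ℕ, x = ZFSet.pair (vnOrd n) (vnOrd (κ n).ord))) :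
    ∀ g : ℕ → Ordinal,
      (∀ n, g n < (κ n).ord ∧ ∃ j < δ, vnOrd (g n) ∈ M j) →
      ∃ f : ℕ → Ordinal, (∀ n, f n < (κ n).ord) ∧
        (∃ sf : ZFSet, (∃ j < δ, sf ∈ M j) ∧
          ∀ x : ZFSet, (x ∈ sf ↔ ∃ n : ℕ, x = ZFSet.pair (vnOrd n) (vnOrd (f n)))) ∧
        ∀ n, g n < f n :=
  IA_limit_tight_general d hd hdunc δ hδ vnOrd hvn M memZ hmemZ hmono hIA κ hreg hmonoκ hcard hκM
end

section
/- Let M ≺ 𝔄 be a tight structure for ⟨κₙ⟩ containing a scale f⃗ = ⟨f_α : α < λ⟩ on ∏ₙ κₙ, with |M| < κ₀, and let δ = sup(M ∩ λ). Then the characteristic function χ_M (χ_M(n) = sup(M ∩ κₙ)) is an exact upper bound of f⃗ ↾ δ. -/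
open Filter

/-- `f <* g` : eventual (mod finite) domination. -/
def evDom (f g : ℕ → Ordinal) : Prop := ∀ᶠ n in atTop, f n < g n

/-!
Both halves rest on one observation: since `M` is closed under successor, every `α ∈ M`
below a limit ordinal `c` lies strictly below `sup (M ∩ c)`.
For the upper bound, `α < δ` is below some `β ∈ M ∩ λ`; then `f_α <* f_β`, and the values
of `f_β ∈ M` lie in `M ∩ κₙ`, hence below `χ_M(n)`.
For exactness, a function `h < χ_M` is pointwise below some `g ∈ ∏ₙ (M ∩ κₙ)`; tightness
bounds `g` by a function of `M`, which the scale, by elementarity, dominates by some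
`f_α` with `α ∈ M ∩ λ`, so `α < δ`.
-/

namespace Ordinal

theorem lt_sSup_inter_Iio {S : Set Ordinal} (hS : ∀ α ∈ S, α + 1 ∈ S) {c α : Ordinal}
    (hc : Order.IsSuccLimit c) (hα : α ∈ S) (hαc : α < c) : α < sSup (S ∩ Set.Iio c) := by
  have hsucc : α + 1 ∈ S ∩ Set.Iio c :=
    ⟨hS α hα, by rw [Set.mem_Iio, ← Order.succ_eq_add_one]; exact hc.succ_lt hαc⟩
  calc α < α + 1 := lt_add_one α
    _ ≤ sSup (S ∩ Set.Iio c) := le_csSup (bddAbove_Iio.mono Set.inter_subset_right) hsucc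

end Ordinal

section CharFunction

variable {κ : ℕ → Cardinal} {lam : Ordinal} {f : Ordinal → ℕ → Ordinal}
  {Mord : Set Ordinal} {Mfun : Set (ℕ → Ordinal)}

theorem evDom_sSup_inter_Iio_ord (hκ : ∀ n, Cardinal.aleph0 ≤ κ n)
    (hinc : ∀ α β, α < β → β < lam → evDom (f α) (f β))
    (hbd : ∀ α < lam, ∀ᶠ n in atTop, f α n < (κ n).ord)
    (hvals : ∀ g ∈ Mfun, ∀ n, g n ∈ Mord) (hsucc : ∀ α ∈ Mord, α + 1 ∈ Mord)
    (hscaleM : ∀ α ∈ Mord, α < lam → f α ∈ Mfun)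
    {α : Ordinal} (hα : α < sSup (Mord ∩ Set.Iio lam)) :
    evDom (f α) fun n => sSup (Mord ∩ Set.Iio (κ n).ord) := by
  obtain ⟨β, ⟨hβM, hβlam⟩, hαβ⟩ := exists_lt_of_lt_csSup' hα
  filter_upwards [hinc α β hαβ hβlam, hbd β hβlam] with n hfαβ hfβκ
  exact hfαβ.trans <| Ordinal.lt_sSup_inter_Iio hsucc (Cardinal.isSuccLimit_ord (hκ n))
    (hvals _ (hscaleM β hβM hβlam) n) hfβκ

theorem exists_evDom_of_lt_sSup_inter_Iio_ord (hlamlim : Order.IsSuccLimit lam)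
    (hsucc : ∀ α ∈ Mord, α + 1 ∈ Mord)
    (hMcofinal : ∀ g ∈ Mfun, (∀ᶠ n in atTop, g n < (κ n).ord) →
      ∃ α ∈ Mord, α < lam ∧ evDom g (f α))
    (htight : ∀ g : ℕ → Ordinal, (∀ n, g n ∈ Mord ∧ g n < (κ n).ord) →
      ∃ h ∈ Mfun, (∀ n, h n < (κ n).ord) ∧ ∀ n, g n < h n)
    {h : ℕ → Ordinal} (hh : ∀ n, h n < sSup (Mord ∩ Set.Iio (κ n).ord)) :
    ∃ α < sSup (Mord ∩ Set.Iio lam), evDom h (f α) := by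
  choose g hgM hhg using fun n => exists_lt_of_lt_csSup' (hh n)
  obtain ⟨h', hh'M, hh'κ, hgh'⟩ := htight g hgM
  obtain ⟨α, hαM, hαlam, hh'α⟩ := hMcofinal h' hh'M (Eventually.of_forall hh'κ)
  refine ⟨α, Ordinal.lt_sSup_inter_Iio hsucc hlamlim hαM hαlam, ?_⟩
  filter_upwards [hh'α] with n hn
  exact ((hhg n).trans (hgh' n)).trans hn

end CharFunction

theorem char_function_eub_general (κ : ℕ → Cardinal)
    (hreg : ∀ n, (κ n).IsRegular)
    (lam : Ordinal) (hlamlim : Order.IsSuccLimit lam)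
    (f : Ordinal → ℕ → Ordinal)
    (hinc : ∀ α β, α < β → β < lam → evDom (f α) (f β))
    (hbd : ∀ α < lam, ∀ᶠ n in atTop, f α n < (κ n).ord)
    (Mord : Set Ordinal.{0}) (Mfun : Set (ℕ → Ordinal))
    (hvals : ∀ g ∈ Mfun, ∀ n, g n ∈ Mord)
    (hsucc : ∀ α ∈ Mord, α + 1 ∈ Mord)
    (hscaleM : ∀ α ∈ Mord, α < lam → f α ∈ Mfun)
    (hMcofinal : ∀ g ∈ Mfun, (∀ᶠ n in atTop, g n < (κ n).ord) →
      ∃ α ∈ Mord, α < lam ∧ evDom g (f α))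
    (htight : ∀ g : ℕ → Ordinal, (∀ n, g n ∈ Mord ∧ g n < (κ n).ord) →
      ∃ h ∈ Mfun, (∀ n, h n < (κ n).ord) ∧ ∀ n, g n < h n)
    (δ : Ordinal) (hδ : δ = sSup (Mord ∩ Set.Iio lam))
    (χ : ℕ → Ordinal) (hχ : ∀ n, χ n = sSup (Mord ∩ Set.Iio (κ n).ord)) :
    (∀ α < δ, evDom (f α) χ) ∧
      ∀ h : ℕ → Ordinal, (∀ n, h n < χ n) → ∃ α < δ, evDom h (f α) := by
  obtain rfl : χ = fun n => sSup (Mord ∩ Set.Iio (κ n).ord) := funext hχ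
  subst hδ
  exact ⟨fun α hα => evDom_sSup_inter_Iio_ord (fun n => (hreg n).aleph0_le) hinc hbd hvals
      hsucc hscaleM hα,
    fun h hh => exists_evDom_of_lt_sSup_inter_Iio_ord hlamlim hsucc hMcofinal htight hh⟩

/-- if `M` (with ordinal part `Mord` and function part `Mfun`) is a tight
structure of size `< κ₀` containing a scale `⟨f α : α < λ⟩` on `∏ₙ κₙ`, and
`δ = sup(M ∩ λ)`, then the characteristic function `χ_M(n) = sup(M ∩ κₙ)` is an exact
upper bound of `f ↾ δ`. -/
theorem char_function_eub (κ : ℕ → Cardinal)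
    (hreg : ∀ n, (κ n).IsRegular) (hmonoκ : StrictMono κ)
    (lam : Ordinal) (hlam : (⨆ n, κ n).ord < lam) (hlamlim : Order.IsSuccLimit lam)
    (f : Ordinal → ℕ → Ordinal)
    (hinc : ∀ α β, α < β → β < lam → evDom (f α) (f β))
    (hbd : ∀ α < lam, ∀ᶠ n in atTop, f α n < (κ n).ord)
    (hcofinal : ∀ g : ℕ → Ordinal, (∀ n, g n < (κ n).ord) → ∃ α < lam, evDom g (f α))
    (Mord : Set Ordinal.{0}) (Mfun : Set (ℕ → Ordinal))
    (hcard : Cardinal.mk Mord < Cardinal.lift.{1} (κ 0))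
    (hvals : ∀ g ∈ Mfun, ∀ n, g n ∈ Mord)
    (hsucc : ∀ α ∈ Mord, α + 1 ∈ Mord)
    (hscaleM : ∀ α ∈ Mord, α < lam → f α ∈ Mfun)
    (hMcofinal : ∀ g ∈ Mfun, (∀ᶠ n in atTop, g n < (κ n).ord) →
      ∃ α ∈ Mord, α < lam ∧ evDom g (f α))
    (hMne : ∀ n, ∃ α ∈ Mord, α < (κ n).ord)
    (htight : ∀ g : ℕ → Ordinal, (∀ n, g n ∈ Mord ∧ g n < (κ n).ord) →
      ∃ h ∈ Mfun, (∀ n, h n < (κ n).ord) ∧ ∀ n, g n < h n)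
    (δ : Ordinal) (hδ : δ = sSup (Mord ∩ Set.Iio lam))
    (χ : ℕ → Ordinal) (hχ : ∀ n, χ n = sSup (Mord ∩ Set.Iio (κ n).ord)) :
    (∀ α < δ, evDom (f α) χ) ∧
      ∀ h : ℕ → Ordinal, (∀ n, h n < χ n) → ∃ α < δ, evDom h (f α) :=
  char_function_eub_general κ hreg lam hlamlim f hinc hbd Mord Mfun hvals hsucc hscaleM hMcofinal
    htight δ hδ χ hχ
end

section
/- Let x, x' ∈ [λₙ]^{<κₙ} realize the same type in 𝔄_{n,k} (k ≥ 2, under GCH). Then: (1) otp(x) = otp(x'); (2) for α ∈ x and the corresponding α' ∈ x' under the order isomorphism, Eₙ(α) = Eₙ(α'); (3) for α ≤_{Eₙ} β in x and corresponding α', β' in x', π_{β,α} = π_{β',α'}. -/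
/-!
The position of `α ∈ x`, i.e. the order type `γ` of `x ∩ α`, is below `κ`, so it is named by a
constant `ψ_γ`, and "the position of `z` in `v` is `γ`" is the formula `∃ s, ψ_γ(s) ∧ v ∩ z ≅ s`,
where `≅` is an `∈`-isomorphism given by a set of Kuratowski pairs. So every formula about the
elements of `x` at prescribed positions passes, through the common type, to the elements of `x'`
at the same positions. With the trivial formula this shows that `x` and `x'` have the same
positions, hence the same order type; with the definitions of `E`, `≤_E` and `π` it shows that
the order isomorphism preserves them.
-/

open FirstOrder FirstOrder.Language Ordinal

noncomputable section

universe u v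

namespace ZFSet

/-- `f` need not be a function: on sets of ordinals the last clause makes it one. -/
def MemIsomorphic (a b : ZFSet.{u}) : Prop :=
  ∃ f : ZFSet.{u}, (∀ u ∈ a, ∃ w ∈ b, pair u w ∈ f) ∧
    (∀ w ∈ b, ∃ u ∈ a, pair u w ∈ f) ∧
    ∀ u w u' w', pair u w ∈ f → pair u' w' ∈ f → (u ∈ u' ↔ w ∈ w')

end ZFSet

lemma eq_iff_eq_of_lt_iff_lt {α β : Type*} [LinearOrder α] [LinearOrder β] {a a' : α}
    {b b' : β} (h : a < a' ↔ b < b') (h' : a' < a ↔ b' < b) : a = a' ↔ b = b' := by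
  simp only [le_antisymm_iff, ← not_lt, h, h', and_comm]

lemma Ordinal.typeLT_eq_iff_nonempty_orderIso {α β : Type u} [LinearOrder α] [WellFoundedLT α]
    [LinearOrder β] [WellFoundedLT β] : typeLT α = typeLT β ↔ Nonempty (α ≃o β) :=
  type_eq.trans ⟨fun ⟨e⟩ => ⟨.ofRelIsoLT e⟩, fun ⟨e⟩ => ⟨e.toRelIsoLT⟩⟩

lemma Ordinal.typeLT_inter_Iio (x : Set Ordinal.{v}) (a : x) :
    typeLT ↥(x ∩ Set.Iio (a : Ordinal)) = typein LT.lt a :=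
  (OrderIso.ordinalType_congr
    { toFun := fun b => ⟨⟨b.1, b.2.1⟩, b.2.2⟩
      invFun := fun b => ⟨b.1.1, b.1.2, b.2⟩
      left_inv := fun _ => rfl
      right_inv := fun _ => rfl
      map_rel_iff' := Iff.rfl : ↥(x ∩ Set.Iio (a : Ordinal)) ≃o Set.Iio a }).trans
    (type_Iio_lt a)

lemma Ordinal.eq_of_forall_lift_lt_iff {A B : Ordinal.{max u v}} {K : Ordinal.{u}}
    (hA : A < lift.{v} K) (hB : B < lift.{v} K)
    (h : ∀ γ < K, lift.{v} γ < A ↔ lift.{v} γ < B) : A = B := by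
  have le_of {A B : Ordinal.{max u v}} (hA : A < lift.{v} K)
      (h : ∀ γ < K, lift.{v} γ < A → lift.{v} γ < B) : A ≤ B :=
    le_of_forall_lt fun c hc => by
      obtain ⟨γ, hγ, rfl⟩ := lt_lift_iff.1 (hc.trans hA)
      exact h γ hγ hc
  exact le_antisymm (le_of hA fun γ hγ => (h γ hγ).1) (le_of hB fun γ hγ => (h γ hγ).2)

def Codes (vnOrd : Ordinal.{v} → ZFSet.{u}) (X : ZFSet.{u}) (s : Set Ordinal.{v}) : Prop :=
  ∀ y, y ∈ X ↔ ∃ a ∈ s, y = vnOrd a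

section Codes

variable {vnOrd : Ordinal.{v} → ZFSet.{u}} (hvn : ∀ a, Codes vnOrd (vnOrd a) (Set.Iio a))
include hvn

lemma injective_of_codes_Iio : Function.Injective vnOrd := by
  intro a b hab
  by_contra hne
  rcases lt_or_gt_of_ne hne with h | h
  · exact ZFSet.mem_irrefl (vnOrd b) ((hvn b _).2 ⟨a, h, hab.symm⟩)
  · exact ZFSet.mem_irrefl (vnOrd a) ((hvn a _).2 ⟨b, h, hab⟩)

lemma mem_iff_lt_of_codes_Iio {a b : Ordinal.{v}} : vnOrd a ∈ vnOrd b ↔ a < b := by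
  refine ⟨fun h => ?_, fun h => (hvn b _).2 ⟨a, h, rfl⟩⟩
  obtain ⟨c, hc, hac⟩ := (hvn b _).1 h
  rwa [injective_of_codes_Iio hvn hac]

lemma Codes.inter {X : ZFSet.{u}} {s : Set Ordinal.{v}} (hX : Codes vnOrd X s) (a : Ordinal.{v}) :
    Codes vnOrd (X ∩ vnOrd a) (s ∩ Set.Iio a) := by
  intro y
  rw [ZFSet.mem_inter, hX]
  constructor
  · rintro ⟨⟨b, hb, rfl⟩, hba⟩
    exact ⟨b, ⟨hb, (mem_iff_lt_of_codes_Iio hvn).1 hba⟩, rfl⟩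
  · rintro ⟨b, ⟨hb, hba⟩, rfl⟩
    exact ⟨⟨b, hb, rfl⟩, (mem_iff_lt_of_codes_Iio hvn).2 hba⟩

variable {X Y : ZFSet.{u}} {s t : Set Ordinal.{v}}

lemma Codes.nonempty_orderIso_of_memIsomorphic (hX : Codes vnOrd X s) (hY : Codes vnOrd Y t)
    (h : X.MemIsomorphic Y) : Nonempty (s ≃o t) := by
  obtain ⟨f, hdom, hcod, hmono⟩ := h
  have hrel {a a' : s} {b b' : t} (h : (vnOrd a).pair (vnOrd b) ∈ f)
      (h' : (vnOrd a').pair (vnOrd b') ∈ f) : a < a' ↔ b < b' := by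
    simpa only [mem_iff_lt_of_codes_Iio hvn, Subtype.coe_lt_coe] using hmono _ _ _ _ h h'
  have htot (a : s) : ∃ b : t, (vnOrd a).pair (vnOrd b) ∈ f := by
    obtain ⟨w, hw, hf⟩ := hdom _ ((hX _).2 ⟨a, a.2, rfl⟩)
    obtain ⟨b, hb, rfl⟩ := (hY w).1 hw
    exact ⟨⟨b, hb⟩, hf⟩
  choose g hg using htot
  refine ⟨StrictMono.orderIsoOfSurjective g (fun a a' h => (hrel (hg a) (hg a')).1 h) ?_⟩
  intro b
  obtain ⟨u, hu, hf⟩ := hcod _ ((hY _).2 ⟨b, b.2, rfl⟩)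
  obtain ⟨a, ha, rfl⟩ := (hX u).1 hu
  exact ⟨⟨a, ha⟩, (eq_iff_eq_of_lt_iff_lt (hrel (hg _) hf) (hrel hf (hg _))).1 rfl⟩

lemma Codes.memIsomorphic_of_orderIso (hX : Codes vnOrd X s) (hY : Codes vnOrd Y t)
    (e : s ≃o t) : X.MemIsomorphic Y := by
  let graph (u w : ZFSet.{u}) : Prop := ∃ a : s, u = vnOrd a ∧ w = vnOrd (e a)
  have mem_graph {u w : ZFSet.{u}} : u.pair w ∈ ZFSet.pairSep graph X Y ↔ graph u w := by
    simp only [ZFSet.mem_pairSep, ZFSet.pair_inj]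
    constructor
    · rintro ⟨_, -, _, -, ⟨rfl, rfl⟩, h⟩
      exact h
    · rintro ⟨a, rfl, rfl⟩
      exact ⟨_, (hX _).2 ⟨a, a.2, rfl⟩, _, (hY _).2 ⟨_, (e a).2, rfl⟩, ⟨rfl, rfl⟩,
        a, rfl, rfl⟩
  refine ⟨ZFSet.pairSep graph X Y, fun u hu => ?_, fun w hw => ?_, fun u w u' w' h h' => ?_⟩
  · obtain ⟨a, ha, rfl⟩ := (hX u).1 hu
    exact ⟨_, (hY _).2 ⟨_, (e ⟨a, ha⟩).2, rfl⟩, mem_graph.2 ⟨⟨a, ha⟩, rfl, rfl⟩⟩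
  · obtain ⟨b, hb, rfl⟩ := (hY w).1 hw
    refine ⟨_, (hX _).2 ⟨_, (e.symm ⟨b, hb⟩).2, rfl⟩,
      mem_graph.2 ⟨e.symm ⟨b, hb⟩, rfl, ?_⟩⟩
    rw [e.apply_symm_apply]
  · obtain ⟨a, rfl, rfl⟩ := mem_graph.1 h
    obtain ⟨a', rfl, rfl⟩ := mem_graph.1 h'
    rw [mem_iff_lt_of_codes_Iio hvn, mem_iff_lt_of_codes_Iio hvn, Subtype.coe_lt_coe,
      Subtype.coe_lt_coe, e.lt_iff_lt]

lemma Codes.memIsomorphic_iff (hX : Codes vnOrd X s) (hY : Codes vnOrd Y t) :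
    X.MemIsomorphic Y ↔ Nonempty (s ≃o t) :=
  ⟨hX.nonempty_orderIso_of_memIsomorphic hvn hY,
    fun ⟨e⟩ => hX.memIsomorphic_of_orderIso hvn hY e⟩

lemma Codes.memIsomorphic_inter_iff_typein {x : Set Ordinal.{v}} (hX : Codes vnOrd X x)
    (a : x) (γ : Ordinal.{v}) :
    (X ∩ vnOrd a).MemIsomorphic (vnOrd γ) ↔ typein LT.lt a = lift.{v + 1} γ := by
  rw [(hX.inter hvn a).memIsomorphic_iff hvn (hvn γ), ← typeLT_inter_Iio, ← type_lt_Iio,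
    typeLT_eq_iff_nonempty_orderIso]

end Codes

namespace MemFormula

variable {L : FirstOrder.Language} {α : Type*}

section
variable {M : Type*} [L.Structure M]

def all (φ : L.Formula (α ⊕ Unit)) : L.Formula α := φ.iAlls Unit

def ex (φ : L.Formula (α ⊕ Unit)) : L.Formula α := φ.iExs Unit

@[simp] lemma realize_all (φ : L.Formula (α ⊕ Unit)) (v : α → M) :
    (all φ).Realize v ↔ ∀ z, φ.Realize (Sum.elim v fun _ => z) :=
  Formula.realize_iAlls.trans ⟨fun h _ => h _, fun h i => h (i ())⟩

@[simp] lemma realize_ex (φ : L.Formula (α ⊕ Unit)) (v : α → M) :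
    (ex φ).Realize v ↔ ∃ z, φ.Realize (Sum.elim v fun _ => z) :=
  Formula.realize_iExs.trans ⟨fun ⟨i, h⟩ => ⟨i (), h⟩, fun ⟨_, h⟩ => ⟨_, h⟩⟩

def eq (a b : α) : L.Formula α := (Term.var a).equal (Term.var b)

@[simp] lemma realize_eq (a b : α) (v : α → M) :
    (eq a b : L.Formula α).Realize v ↔ v a = v b := by
  simp [eq]

end

variable [L.Structure ZFSet.{u}] (φmem : L.Formula (Fin 2))

def mem (a b : α) : L.Formula α := φmem.relabel ![a, b]

def doubleton (q u w : α) : L.Formula α :=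
  all ((mem φmem (.inr ()) (.inl q)).iff (eq (.inr ()) (.inl u) ⊔ eq (.inr ()) (.inl w)))

def kpair (p u w : α) : L.Formula α :=
  all ((mem φmem (.inr ()) (.inl p)).iff
    (doubleton φmem (.inr ()) (.inl u) (.inl u) ⊔ doubleton φmem (.inr ()) (.inl u) (.inl w)))

def pairMem (f u w : α) : L.Formula α :=
  ex (mem φmem (.inr ()) (.inl f) ⊓ kpair φmem (.inr ()) (.inl u) (.inl w))

def inter (w a b : α) : L.Formula α :=
  all ((mem φmem (.inr ()) (.inl w)).iff
    (mem φmem (.inr ()) (.inl a) ⊓ mem φmem (.inr ()) (.inl b)))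

def forallMemExistsMem (a b : α) (φ : L.Formula (α ⊕ Fin 2)) : L.Formula α :=
  all <| (mem φmem (.inr ()) (.inl a)).imp <| ex <|
    mem φmem (.inr ()) (.inl (.inl b)) ⊓
      φ.relabel (Sum.elim (Sum.inl ∘ Sum.inl) ![.inl (.inr ()), .inr ()])

def memIsomorphic (a b : α) : L.Formula α :=
  ex <|
    forallMemExistsMem φmem (.inl a) (.inl b)
      (pairMem φmem (.inl (.inr ())) (.inr 0) (.inr 1)) ⊓
    forallMemExistsMem φmem (.inl b) (.inl a)
      (pairMem φmem (.inl (.inr ())) (.inr 1) (.inr 0)) ⊓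
    Formula.iAlls (Fin 4) ((pairMem φmem (.inl (.inr ())) (.inr 0) (.inr 1)).imp <|
      (pairMem φmem (.inl (.inr ())) (.inr 2) (.inr 3)).imp <|
        (mem φmem (.inr 0) (.inr 2)).iff (mem φmem (.inr 1) (.inr 3)))

def interMemIsomorphic (ψ : L.Formula Unit) (V z : α) : L.Formula α :=
  ex <| ψ.relabel (fun _ => .inr ()) ⊓
    ex (inter φmem (.inr ()) (.inl (.inl V)) (.inl (.inl z)) ⊓
      memIsomorphic φmem (.inr ()) (.inl (.inr ())))

def atPositions {ι : Type*} [Finite ι] (ψ : ι → L.Formula Unit) (χ : L.Formula ι) :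
    L.Formula Unit :=
  Formula.iExs ι <| Formula.iInf (fun i => mem φmem (.inr i) (.inl ()) ⊓
    interMemIsomorphic φmem (ψ i) (.inl ()) (.inr i)) ⊓ χ.relabel Sum.inr

variable {φmem} (hφmem : ∀ a b : ZFSet, φmem.Realize ![a, b] ↔ a ∈ b)
include hφmem

lemma realize_mem (a b : α) (v : α → ZFSet) :
    (mem φmem a b).Realize v ↔ v a ∈ v b := by
  have : v ∘ ![a, b] = ![v a, v b] := by ext i; fin_cases i <;> rfl
  rw [mem, Formula.realize_relabel, this, hφmem]

lemma realize_doubleton (q u w : α) (v : α → ZFSet) :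
    (doubleton φmem q u w).Realize v ↔ v q = {v u, v w} := by
  simp [doubleton, realize_mem hφmem, ZFSet.ext_iff]

lemma realize_kpair (p u w : α) (v : α → ZFSet) :
    (kpair φmem p u w).Realize v ↔ v p = (v u).pair (v w) := by
  simp [kpair, realize_doubleton hφmem, realize_mem hφmem, ZFSet.ext_iff (x := v p), ZFSet.pair,
    ZFSet.pair_eq_singleton]

lemma realize_pairMem (f u w : α) (v : α → ZFSet) :
    (pairMem φmem f u w).Realize v ↔ (v u).pair (v w) ∈ v f := by
  simp [pairMem, realize_kpair hφmem, realize_mem hφmem]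

lemma realize_inter (w a b : α) (v : α → ZFSet) :
    (inter φmem w a b).Realize v ↔ v w = v a ∩ v b := by
  simp [inter, realize_mem hφmem, ZFSet.ext_iff (x := v w)]

lemma realize_forallMemExistsMem (a b : α) (φ : L.Formula (α ⊕ Fin 2)) (v : α → ZFSet) :
    (forallMemExistsMem φmem a b φ).Realize v ↔
      ∀ u ∈ v a, ∃ w ∈ v b, φ.Realize (Sum.elim v ![u, w]) := by
  have (u w : ZFSet) : (Sum.elim (Sum.elim v fun _ => u) fun _ => w) ∘
      Sum.elim (Sum.inl ∘ Sum.inl) ![.inl (.inr ()), .inr ()] = Sum.elim v ![u, w] := by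
    ext (i | i)
    · rfl
    · fin_cases i <;> rfl
  simp [forallMemExistsMem, realize_mem hφmem, this]

lemma realize_memIsomorphic (a b : α) (v : α → ZFSet) :
    (memIsomorphic φmem a b).Realize v ↔ (v a).MemIsomorphic (v b) := by
  simp only [memIsomorphic, ZFSet.MemIsomorphic, realize_ex, Formula.realize_inf,
    Formula.realize_iAlls, Formula.realize_imp, Formula.realize_iff,
    realize_forallMemExistsMem hφmem, realize_pairMem hφmem, realize_mem hφmem, and_assoc]
  exact exists_congr fun f => and_congr_right' <| and_congr_right'
    ⟨fun h u w u' w' => h ![u, w, u', w'], fun h i => h _ _ _ _⟩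

lemma realize_interMemIsomorphic (ψ : L.Formula Unit) (V z : α) (v : α → ZFSet) :
    (interMemIsomorphic φmem ψ V z).Realize v ↔
      ∃ s, ψ.Realize (fun _ => s) ∧ (v V ∩ v z).MemIsomorphic s := by
  simp [interMemIsomorphic, realize_inter hφmem, realize_memIsomorphic hφmem, Function.comp_def]

lemma realize_atPositions {ι : Type*} [Finite ι] (ψ : ι → L.Formula Unit) (χ : L.Formula ι)
    (V : ZFSet) :
    (atPositions φmem ψ χ).Realize (fun _ => V) ↔
      ∃ z : ι → ZFSet, (∀ i, z i ∈ V ∧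
        ∃ s, (ψ i).Realize (fun _ => s) ∧ (V ∩ z i).MemIsomorphic s) ∧ χ.Realize z := by
  simp [atPositions, realize_interMemIsomorphic hφmem, realize_mem hφmem]

end MemFormula

section Transfer

open MemFormula

variable {L : FirstOrder.Language} [L.Structure ZFSet.{u}] {φmem : L.Formula (Fin 2)}
  (hφmem : ∀ a b : ZFSet, φmem.Realize ![a, b] ↔ a ∈ b)
  {vnOrd : Ordinal.{v} → ZFSet.{u}} (hvn : ∀ a, Codes vnOrd (vnOrd a) (Set.Iio a))
include hφmem hvn

lemma Codes.realize_atPositions_iff {X : ZFSet.{u}} {x : Set Ordinal.{v}} (hX : Codes vnOrd X x)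
    {ι : Type*} [Finite ι] {γ : ι → Ordinal.{v}} {ψ : ι → L.Formula Unit}
    (hψ : ∀ i z, (ψ i).Realize (fun _ => z) ↔ z = vnOrd (γ i)) (χ : L.Formula ι) :
    (atPositions φmem ψ χ).Realize (fun _ => X) ↔
      ∃ a : ι → x, (∀ i, typein LT.lt (a i) = lift.{v + 1} (γ i)) ∧
        χ.Realize fun i => vnOrd (a i) := by
  simp only [realize_atPositions hφmem, hψ, exists_eq_left]
  constructor
  · rintro ⟨z, hz, hχ⟩
    choose a ha hza using fun i => (hX (z i)).1 (hz i).1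
    refine ⟨fun i => ⟨a i, ha i⟩, fun i => ?_, ?_⟩
    · rw [← hX.memIsomorphic_inter_iff_typein hvn, ← hza]
      exact (hz i).2
    · rwa [← funext hza]
  · rintro ⟨a, ha, hχ⟩
    exact ⟨_, fun i => ⟨(hX _).2 ⟨_, (a i).2, rfl⟩,
      (hX.memIsomorphic_inter_iff_typein hvn _ _).2 (ha i)⟩, hχ⟩

variable {X X' : ZFSet.{u}} {x x' : Set Ordinal.{v}} (hX : Codes vnOrd X x)
  (hX' : Codes vnOrd X' x')
  (htp : ∀ φ : L.Formula Unit, (φ.Realize fun _ => X) ↔ (φ.Realize fun _ => X'))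
include hX hX' htp

lemma exists_typein_eq_and_realize_iff {ι : Type*} [Finite ι] {γ : ι → Ordinal.{v}}
    (hγ : ∀ i, ∃ ψ : L.Formula Unit, ∀ z, (ψ.Realize fun _ => z) ↔ z = vnOrd (γ i))
    (χ : L.Formula ι) :
    (∃ a : ι → x, (∀ i, typein LT.lt (a i) = lift.{v + 1} (γ i)) ∧
        χ.Realize fun i => vnOrd (a i)) ↔
      ∃ a : ι → x', (∀ i, typein LT.lt (a i) = lift.{v + 1} (γ i)) ∧
        χ.Realize fun i => vnOrd (a i) := by
  choose ψ hψ using hγ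
  rw [← hX.realize_atPositions_iff hφmem hvn hψ, ← hX'.realize_atPositions_iff hφmem hvn hψ]
  exact htp _

variable {κ : Ordinal.{v}} (hxκ : typeLT x < lift.{v + 1} κ)
  (hx'κ : typeLT x' < lift.{v + 1} κ)
  (hconsts : ∀ γ < κ, ∃ ψ : L.Formula Unit, ∀ z, (ψ.Realize fun _ => z) ↔ z = vnOrd γ)
include hxκ hx'κ hconsts

lemma typeLT_eq_of_realize_iff : typeLT x = typeLT x' := by
  have lift_lt_typeLT_iff (y : Set Ordinal.{v}) (γ : Ordinal.{v}) :
      (∃ a : Unit → y, (∀ i, typein LT.lt (a i) = lift.{v + 1} γ) ∧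
        (⊤ : L.Formula Unit).Realize fun i => vnOrd (a i)) ↔ lift.{v + 1} γ < typeLT y := by
    rw [← mem_range_typein_iff]
    exact ⟨fun ⟨a, ha, _⟩ => ⟨a (), ha ()⟩,
      fun ⟨a, ha⟩ => ⟨fun _ => a, fun _ => ha, Formula.realize_top.2 trivial⟩⟩
  refine eq_of_forall_lift_lt_iff hxκ hx'κ fun γ hγ => ?_
  rw [← lift_lt_typeLT_iff, ← lift_lt_typeLT_iff]
  exact exists_typein_eq_and_realize_iff hφmem hvn hX hX' htp (fun _ => hconsts γ hγ) ⊤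

theorem exists_orderIso_forall_realize :
    ∃ e : x ≃o x', ∀ {ι : Type} [Finite ι] (a : ι → x) (χ : L.Formula ι),
      (χ.Realize fun i => vnOrd (a i)) → χ.Realize fun i => vnOrd (e (a i)) := by
  obtain ⟨e⟩ := typeLT_eq_iff_nonempty_orderIso.1
    (typeLT_eq_of_realize_iff hφmem hvn hX hX' htp hxκ hx'κ hconsts)
  refine ⟨e, fun {ι} _ a χ hχ => ?_⟩
  choose γ hγκ hγ using fun i => lt_lift_iff.1 ((typein_lt_type _ (a i)).trans hxκ)
  obtain ⟨a', ha', hχ'⟩ := (exists_typein_eq_and_realize_iff hφmem hvn hX hX' htp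
    (fun i => hconsts (γ i) (hγκ i)) χ).1 ⟨a, fun i => (hγ i).symm, hχ⟩
  have ha'_eq : a' = fun i => e (a i) := funext fun i => (typein_inj LT.lt).1 <| by
    rw [ha', hγ]
    exact (typein_apply e.toRelIsoLT.toInitialSeg (a i)).symm
  rwa [ha'_eq] at hχ'

end Transfer

theorem type_determines_extender_data_general
    (L : FirstOrder.Language.{0, 0}) [L.Structure ZFSet]
    (vnOrd : Ordinal → ZFSet)
    (hvn : ∀ α x, x ∈ vnOrd α ↔ ∃ β < α, x = vnOrd β)
    (φmem : L.Formula (Fin 2)) (hφmem : ∀ a b : ZFSet, φmem.Realize ![a, b] ↔ a ∈ b)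
    (κc : Cardinal) (κ lam : Ordinal) (hκ : κ = κc.ord)
    -- constants for the ordinals below `κ`:
    (hconsts : ∀ α < κ, ∃ ψ : L.Formula Unit,
      ∀ z : ZFSet, (ψ.Realize fun _ => z) ↔ z = vnOrd α)
    (E : Ordinal → Set (Set Ordinal))
    (leE : Ordinal → Ordinal → Prop)
    (π : Ordinal → Ordinal → (Ordinal → Ordinal))
    -- parameter-free definability of the measure assignment, of the Rudin–Keisler order, and
    -- of the projections:
    (hdefE : ∀ β, κ ≤ β → β < lam → ∃ φ : L.Formula Unit,
      ∀ β', κ ≤ β' → β' < lam → ((φ.Realize fun _ => vnOrd β') ↔ E β' = E β))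
    (hdefle : ∃ φ : L.Formula (Fin 2),
      ∀ α β, (φ.Realize ![vnOrd α, vnOrd β]) ↔ leE α β)
    (hdefπ : ∀ β α, leE α β → ∃ φ : L.Formula (Fin 2),
      ∀ β' α', leE α' β' → ((φ.Realize ![vnOrd β', vnOrd α']) ↔ π β' α' = π β α))
    (x x' : Set Ordinal) (hx : x ⊆ Set.Ico κ lam) (hx' : x' ⊆ Set.Ico κ lam)
    (hxcard : Cardinal.mk x < Cardinal.lift.{1, 0} κc)
    (hx'card : Cardinal.mk x' < Cardinal.lift.{1, 0} κc)
    (xz x'z : ZFSet)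
    (hxz : ∀ y, y ∈ xz ↔ ∃ α ∈ x, y = vnOrd α)
    (hx'z : ∀ y, y ∈ x'z ↔ ∃ α ∈ x', y = vnOrd α)
    -- `x` and `x'` realize the same type:
    (htp : ∀ φ : L.Formula Unit, (φ.Realize fun _ => xz) ↔ (φ.Realize fun _ => x'z)) :
    ∃ e : x ≃o x',
      (∀ α : x, E α = E (e α)) ∧
      (∀ α β : x, leE α β → leE (e α) (e β)) ∧
      (∀ α β : x, leE α β → π (β : Ordinal) (α : Ordinal) = π (e β : Ordinal) (e α : Ordinal)) := by
  have type_lt {y : Set Ordinal} (hy : Cardinal.mk y < Cardinal.lift.{1, 0} κc) :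
      typeLT y < lift.{1} κ := by
    rwa [hκ, Cardinal.lift_ord, Cardinal.lt_ord, card_type]
  obtain ⟨e, he⟩ := exists_orderIso_forall_realize hφmem hvn hxz hx'z htp (type_lt hxcard)
    (type_lt hx'card) hconsts
  have he₂ (α β : x) (χ : L.Formula (Fin 2)) (h : χ.Realize ![vnOrd α, vnOrd β]) :
      χ.Realize ![vnOrd (e α), vnOrd (e β)] := by
    have hvec (f : x → ZFSet) : (fun i => f (![α, β] i)) = ![f α, f β] := by
      ext i; fin_cases i <;> rfl
    simpa only [hvec (fun a => vnOrd (e a))] using he ![α, β] χ (by rwa [hvec fun a => vnOrd a])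
  obtain ⟨φle, hφle⟩ := hdefle
  have hle (α β : x) (h : leE α β) : leE (e α) (e β) :=
    (hφle _ _).1 (he₂ α β φle ((hφle α β).2 h))
  refine ⟨e, fun α => ?_, hle, fun α β h => ?_⟩
  · obtain ⟨φE, hφE⟩ := hdefE α (hx α.2).1 (hx α.2).2
    exact ((hφE _ (hx' (e α).2).1 (hx' (e α).2).2).1
      (he (fun _ : Unit => α) φE ((hφE α (hx α.2).1 (hx α.2).2).2 rfl))).symm
  · obtain ⟨φπ, hφπ⟩ := hdefπ β α h
    exact ((hφπ _ _ (hle α β h)).1 (he₂ β α φπ ((hφπ β α h).2 rfl))).symm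

/-- if two sets `x, x' ∈ [λ]^{<κ}` realize the same type in `𝔄_{n,k}` (a
structure in a language with membership, constants for the ordinals below `κ`, and
definitions of the measures `E_α` and projections `π_{β,α}` of the extender), then they have
the same order type, and the order isomorphism between them preserves the attached measures,
the Rudin–Keisler ordering, and the projection maps. -/
theorem type_determines_extender_data
    (L : FirstOrder.Language.{0, 0}) [L.Structure ZFSet]
    (vnOrd : Ordinal → ZFSet)
    (hvn : ∀ α x, x ∈ vnOrd α ↔ ∃ β < α, x = vnOrd β)
    (φmem : L.Formula (Fin 2)) (hφmem : ∀ a b : ZFSet, φmem.Realize ![a, b] ↔ a ∈ b)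
    (κc : Cardinal) (κ lam : Ordinal) (hκ : κ = κc.ord) (hκlam : κ < lam)
    -- constants for the ordinals below `κ`:
    (hconsts : ∀ α < κ, ∃ ψ : L.Formula Unit,
      ∀ z : ZFSet, (ψ.Realize fun _ => z) ↔ z = vnOrd α)
    (E : Ordinal → Set (Set Ordinal))
    (leE : Ordinal → Ordinal → Prop)
    (π : Ordinal → Ordinal → (Ordinal → Ordinal))
    -- parameter-free definability of the measure assignment, of the Rudin–Keisler order, and
    -- of the projections:
    (hdefE : ∀ β, κ ≤ β → β < lam → ∃ φ : L.Formula Unit,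
      ∀ β', κ ≤ β' → β' < lam → ((φ.Realize fun _ => vnOrd β') ↔ E β' = E β))
    (hdefle : ∃ φ : L.Formula (Fin 2),
      ∀ α β, (φ.Realize ![vnOrd α, vnOrd β]) ↔ leE α β)
    (hdefπ : ∀ β α, leE α β → ∃ φ : L.Formula (Fin 2),
      ∀ β' α', leE α' β' → ((φ.Realize ![vnOrd β', vnOrd α']) ↔ π β' α' = π β α))
    (x x' : Set Ordinal) (hx : x ⊆ Set.Ico κ lam) (hx' : x' ⊆ Set.Ico κ lam)
    (hxcard : Cardinal.mk x < Cardinal.lift.{1, 0} κc)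
    (hx'card : Cardinal.mk x' < Cardinal.lift.{1, 0} κc)
    (xz x'z : ZFSet)
    (hxz : ∀ y, y ∈ xz ↔ ∃ α ∈ x, y = vnOrd α)
    (hx'z : ∀ y, y ∈ x'z ↔ ∃ α ∈ x', y = vnOrd α)
    -- `x` and `x'` realize the same type:
    (htp : ∀ φ : L.Formula Unit, (φ.Realize fun _ => xz) ↔ (φ.Realize fun _ => x'z)) :
    ∃ e : x ≃o x',
      (∀ α : x, E α = E (e α)) ∧
      (∀ α β : x, leE α β → leE (e α) (e β)) ∧
      (∀ α β : x, leE α β → π (β : Ordinal) (α : Ordinal) = π (e β : Ordinal) (e α : Ordinal)) :=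
  type_determines_extender_data_general L vnOrd hvn φmem hφmem κc κ lam hκ hconsts E leE π hdefE
    hdefle hdefπ x x' hx hx' hxcard hx'card xz x'z hxz hx'z htp
end
end

section
/- Suppose ℙ is a Prikry-type forcing such that for every condition p the direct extension order of ℙ/p is κ_{ℓᵖ}-closed where κ_{ℓᵖ} can be made arbitrarily large below κ_ω by extending p, together with the strong Prikry property (Lemma: for every dense open D and p there exist k and p* ≥* p with p* ⌢ ν⃗ ∈ D for all ν⃗ from the measure-one sets). Then ℙ preserves κ_ω⁺, where κ_ω is a singular cardinal of cofinality ω. -/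
/-!
Fix `n` with `|ρ| < κₙ` and extend `p` so that its direct extension order is `κₙ`-closed.
By the strong Prikry property, every single value `f(i)` can be bounded below `κ_ω⁺` by a
direct extension: the value is decided on fewer than `κ_ω` predense extensions. Closure lets us
do this for all `i < ρ` along one `≤*`-increasing chain, and regularity of `κ_ω⁺` bounds the
`ρ` resulting bounds by a single ordinal below `κ_ω⁺`.
-/

open Cardinal Order Set

universe u v

variable {P : Type u}

theorem Cardinal.IsRegular.lift_iSup_lt_ord {ι : Type v} {c : Cardinal.{u}} (hc : c.IsRegular)
    (hι : Cardinal.lift.{u} #ι < Cardinal.lift.{v} c) {f : ι → Ordinal.{u}}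
    (hf : ∀ i, f i < c.ord) :
    ⨆ i, f i < c.ord :=
  Ordinal.lift_iSup_lt_of_lt_cof (by rwa [← Ordinal.lift_cof, hc.cof_ord]) hf

section ChainClosed

variable {les : P → P → Prop} {θ ρ : Ordinal.{u}}

def ChainClosed (les : P → P → Prop) (θ : Ordinal.{u}) : Prop :=
  ∀ ρ < θ, ∀ c : Ordinal.{u} → P, (∀ i j, i ≤ j → j < ρ → les (c i) (c j)) →
    ∃ q, ∀ i < ρ, les (c i) q

theorem ChainClosed.exists_chain (hrefl : ∀ p, les p p)
    (htrans : ∀ p q r, les p q → les q r → les p r) (hc : ChainClosed les θ) (hρ : ρ < θ)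
    (step : Ordinal.{u} → P → P) (hstep : ∀ i q, les q (step i q)) (p : P) :
    ∃ c : Ordinal.{u} → P, ∀ i ≤ ρ,
      (∃ x, c i = step i x) ∧ les p (c i) ∧ ∀ j < i, les (c j) (c i) := by
  classical
  let bound : ∀ i : Ordinal.{u}, (∀ j < i, P) → P := fun i prev =>
    if h : ∃ x, les p x ∧ ∀ j (hj : j < i), les (prev j hj) x then h.choose else p
  let c : Ordinal.{u} → P := Ordinal.lt_wf.fix fun i prev => step i (bound i prev)
  have hc_eq : ∀ i, c i = step i (bound i fun j _ => c j) := Ordinal.lt_wf.fix_eq _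
  refine ⟨c, fun i => ?_⟩
  induction i using WellFoundedLT.induction with
  | _ i ih =>
    intro hi
    have hub : ∃ x, les p x ∧ ∀ j < i, les (c j) x := by
      rcases eq_or_ne i 0 with rfl | hi0
      · exact ⟨p, hrefl p, fun j hj => absurd hj not_lt_zero⟩
      have hpos : 0 < i := pos_iff_ne_zero.2 hi0
      have hchain : ∀ a b, a ≤ b → b < i → les (c a) (c b) := fun a b hab hb =>
        hab.eq_or_lt.elim (fun h => h ▸ hrefl _) fun h => (ih b hb (hb.le.trans hi)).2.2 a h
      obtain ⟨x, hx⟩ := hc i (hi.trans_lt hρ) c hchain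
      exact ⟨x, htrans _ _ _ (ih 0 hpos (hpos.le.trans hi)).2.1 (hx 0 hpos), hx⟩
    have hbound : bound i (fun j _ => c j) = hub.choose := dif_pos hub
    obtain ⟨hpu, hcu⟩ := hub.choose_spec
    rw [hc_eq i, hbound]
    exact ⟨⟨_, rfl⟩, htrans _ _ _ hpu (hstep _ _),
      fun j hj => htrans _ _ _ (hcu j hj) (hstep _ _)⟩

theorem ChainClosed.exists_les_forall_mem (hrefl : ∀ p, les p p)
    (htrans : ∀ p q r, les p q → les q r → les p r) (hc : ChainClosed les θ) (hρ : ρ < θ)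
    (G : Ordinal.{u} → Set P) (hopen : ∀ i < ρ, ∀ q q', q ∈ G i → les q q' → q' ∈ G i)
    (hdense : ∀ i < ρ, ∀ q, ∃ q', les q q' ∧ q' ∈ G i) (p : P) :
    ∃ q, les p q ∧ ∀ i < ρ, q ∈ G i := by
  classical
  choose! ext hext_les hext_mem using hdense
  let step i q := if i < ρ then ext i q else q
  have hstep : ∀ i q, les q (step i q) := fun i q => by
    by_cases hi : i < ρ
    · simpa only [step, if_pos hi] using hext_les i hi q
    · simpa only [step, if_neg hi] using hrefl q
  obtain ⟨c, hc⟩ := hc.exists_chain hrefl htrans hρ step hstep p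
  obtain ⟨-, hpc, hcc⟩ := hc ρ le_rfl
  refine ⟨c ρ, hpc, fun i hi => hopen i hi (c i) (c ρ) ?_ (hcc i hi)⟩
  obtain ⟨x, hx⟩ := (hc i hi.le).1
  simpa only [hx, step, if_pos hi] using hext_mem i hi x

end ChainClosed

section ForcesLt

variable {le : P → P → Prop}

/-- `q` forces the ordinal named by `S` to be below `b`. -/
def ForcesLt (le : P → P → Prop) (S : P → Ordinal.{u} → Prop) (q : P) (b : Ordinal.{u}) :
    Prop :=
  ∀ r, le q r → ∀ β, S r β → β < b

theorem ForcesLt.mono_left (htrans : ∀ p q r, le p q → le q r → le p r)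
    {S : P → Ordinal.{u} → Prop} {q q' : P} {b : Ordinal.{u}} (h : ForcesLt le S q b)
    (hqq' : le q q') : ForcesLt le S q' b :=
  fun r hr => h r (htrans _ _ _ hqq' hr)

theorem ForcesLt.mono_right {S : P → Ordinal.{u} → Prop} {q : P} {b b' : Ordinal.{u}}
    (h : ForcesLt le S q b) (hbb' : b ≤ b') : ForcesLt le S q b' :=
  fun r hr β hβ => (h r hr β hβ).trans_le hbb'

theorem exists_forcesLt_of_predense {S : P → Ordinal.{u} → Prop} {c : Cardinal.{u}}
    (hmono : ∀ p q β, S p β → le p q → S q β) (hval : ∀ p β β', S p β → S p β' → β = β')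
    (hc : c.IsRegular) (hbound : ∀ p β, S p β → β < c.ord) {q : P} {T : Set P} (hT : #T < c)
    (hTS : ∀ t ∈ T, ∃ β, S t β) (hpre : ∀ r, le q r → ∃ t ∈ T, ∃ s, le t s ∧ le r s) :
    ∃ b < c.ord, ForcesLt le S q b := by
  choose! val hval_spec using hTS
  refine ⟨⨆ t : T, succ (val t), hc.lift_iSup_lt_ord (lift_lt.2 hT) fun t =>
    (Cardinal.isSuccLimit_ord hc.aleph0_le).succ_lt (hbound _ _ (hval_spec t t.2)), ?_⟩
  intro r hr β hβ
  obtain ⟨t, ht, s, hts, hrs⟩ := hpre r hr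
  obtain rfl : β = val t := hval s _ _ (hmono r s β hβ hrs) (hmono t s _ (hval_spec t ht) hts)
  exact (lt_succ _).trans_le (le_ciSup Ordinal.bddAbove_of_small (⟨t, ht⟩ : T))

theorem exists_forcesLt_forall_lt {S : Ordinal.{u} → P → Ordinal.{u} → Prop} {c : Cardinal.{u}}
    (hc : c.IsRegular) {ρ : Ordinal.{u}} (hρ : ρ.card < c) {q : P}
    (h : ∀ i < ρ, ∃ b < c.ord, ForcesLt le (S i) q b) :
    ∃ b < c.ord, ∀ i < ρ, ForcesLt le (S i) q b := by
  choose b hb_lt hb using h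
  have hρ' : lift.{u} #(Iio ρ) < lift.{u + 1} c := by
    rwa [mk_Iio_ordinal.{u}, lift_lift, lift_lt]
  refine ⟨⨆ i : Iio ρ, b i i.2, hc.lift_iSup_lt_ord hρ' fun i => hb_lt i i.2, fun i hi =>
    (hb i hi).mono_right (le_ciSup (f := fun i : Iio ρ => b i i.2) ⟨c.ord, ?_⟩ ⟨i, hi⟩)⟩
  rintro _ ⟨j, rfl⟩
  exact (hb_lt j j.2).le

def StrongPrikry (le les : P → P → Prop) (θ : Cardinal.{u}) : Prop :=
  ∀ D : Set P, (∀ p q, p ∈ D → le p q → q ∈ D) → (∀ p, ∃ q, le p q ∧ q ∈ D) →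
    ∀ p : P, ∃ q : P, les p q ∧ ∃ T : Set P, T ⊆ D ∧ (∀ t ∈ T, le q t) ∧ #T < θ ∧
      ∀ r, le q r → ∃ t ∈ T, ∃ s, le t s ∧ le r s

theorem StrongPrikry.exists_les_forcesLt {les : P → P → Prop} {θ c : Cardinal.{u}}
    (hSP : StrongPrikry le les θ) (hc : c.IsRegular) (hθc : θ ≤ c)
    {S : P → Ordinal.{u} → Prop} (hmono : ∀ p q β, S p β → le p q → S q β)
    (hval : ∀ p β β', S p β → S p β' → β = β') (hbound : ∀ p β, S p β → β < c.ord)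
    (hdense : ∀ p, ∃ q, le p q ∧ ∃ β, S q β) (p : P) :
    ∃ q, les p q ∧ ∃ b < c.ord, ForcesLt le S q b := by
  obtain ⟨q, hpq, T, hTD, -, hT, hpre⟩ :=
    hSP {r | ∃ β, S r β} (fun p q ⟨β, h⟩ hpq => ⟨β, hmono p q β h hpq⟩) hdense p
  exact ⟨q, hpq, exists_forcesLt_of_predense hmono hval hc hbound (hT.trans_le hθc) hTD hpre⟩

end ForcesLt

theorem prikry_preserves_successor_general
    (P : Type) (le les : P → P → Prop)
    (htrans : ∀ p q r, le p q → le q r → le p r)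
    (hsrefl : ∀ p, les p p) (hstrans : ∀ p q r, les p q → les q r → les p r)
    (hsub : ∀ p q, les p q → le p q)
    (κ : ℕ → Cardinal) (hreg : ∀ n, (κ n).IsRegular) (hmono : StrictMono κ)
    (ℓ : P → ℕ)
    -- the direct extension order above `p` is `κ_{ℓ p}`-closed:
    (hclosed : ∀ p : P, ∀ ρ : Ordinal, ρ < (κ (ℓ p)).ord →
      ∀ c : Ordinal → P, (∀ i j, i ≤ j → j < ρ → les (c i) (c j)) →
        ∃ q : P, ∀ i < ρ, les (c i) q)
    -- `κ_{ℓ p}` can be made arbitrarily large below `κ_ω` by extending `p`: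
    (hlarge : ∀ p : P, ∀ n : ℕ, ∃ q : P, le p q ∧ n ≤ ℓ q)
    -- strong Prikry property: for dense open `D` there is a direct extension `q` such that the
    -- (fewer than `κ_ω` many) extensions of `q` by tuples from the measure-one sets all lie in
    -- `D`, and they are predense above `q`:
    (hSP : ∀ D : Set P, (∀ p q, p ∈ D → le p q → q ∈ D) → (∀ p, ∃ q, le p q ∧ q ∈ D) →
      ∀ p : P, ∃ q : P, les p q ∧ ∃ T : Set P, T ⊆ D ∧ (∀ t ∈ T, le q t) ∧
        Cardinal.mk T < (⨆ n, κ n) ∧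
        ∀ r, le q r → ∃ t ∈ T, ∃ s, le t s ∧ le r s)
    -- `R` is a name for a function from `ρ` to `κ_ω⁺`:
    (ρ : Ordinal) (hρ : ρ < (⨆ n, κ n).ord)
    (R : Ordinal → P → Ordinal → Prop)
    (hmonoR : ∀ i p q β, R i p β → le p q → R i q β)
    (hval : ∀ i p β β', R i p β → R i p β' → β = β')
    (hbound : ∀ i p β, R i p β → β < (Order.succ (⨆ n, κ n)).ord)
    (hdense : ∀ i < ρ, ∀ p, ∃ q, le p q ∧ ∃ β, R i q β)
    (p : P) :
    ∃ q, le p q ∧ ∃ b < (Order.succ (⨆ n, κ n)).ord,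
      ∀ i < ρ, ∀ r, le q r → ∀ β, R i r β → β < b := by
  set θ := ⨆ n, κ n
  have hθ : ℵ₀ ≤ θ := (hreg 0).aleph0_le.trans (le_ciSup bddAbove_of_small 0)
  have hsucc : (succ θ).IsRegular := isRegular_succ hθ
  obtain ⟨n, hn⟩ : ∃ n, ρ.card < κ n := (lt_ciSup_iff bddAbove_of_small).1 (lt_ord.1 hρ)
  obtain ⟨p₀, hpp₀, hnℓ⟩ := hlarge p n
  have hρ₀ : ρ < (κ (ℓ p₀)).ord := lt_ord.2 (hn.trans_le (hmono.monotone hnℓ))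
  obtain ⟨q, hp₀q, hq⟩ := ChainClosed.exists_les_forall_mem hsrefl hstrans (hclosed p₀) hρ₀
    (fun i => {q | ∃ b < (succ θ).ord, ForcesLt le (R i) q b})
    (fun _ _ _ _ ⟨b, hb, hqb⟩ hqq' => ⟨b, hb, hqb.mono_left htrans (hsub _ _ hqq')⟩)
    (fun i hi => StrongPrikry.exists_les_forcesLt hSP hsucc (le_succ θ) (hmonoR i) (hval i)
      (hbound i) (hdense i hi)) p₀
  exact ⟨q, htrans _ _ _ hpp₀ (hsub _ _ hp₀q),
    exists_forcesLt_forall_lt hsucc ((lt_ord.1 hρ).trans (lt_succ θ)) hq⟩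

/-- a Prikry-type forcing `(P, le, les)` whose direct extension orders are
increasingly closed and which satisfies the strong Prikry property preserves `κ_ω⁺`:
every name `R` for a function from `ρ < κ_ω` to `κ_ω⁺` is forced bounded below `κ_ω⁺`. -/
theorem prikry_preserves_successor
    (P : Type) (le les : P → P → Prop)
    (hrefl : ∀ p, le p p) (htrans : ∀ p q r, le p q → le q r → le p r)
    (hsrefl : ∀ p, les p p) (hstrans : ∀ p q r, les p q → les q r → les p r)
    (hsub : ∀ p q, les p q → le p q)
    (κ : ℕ → Cardinal) (hreg : ∀ n, (κ n).IsRegular) (hmono : StrictMono κ)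
    (ℓ : P → ℕ)
    -- the direct extension order above `p` is `κ_{ℓ p}`-closed:
    (hclosed : ∀ p : P, ∀ ρ : Ordinal, ρ < (κ (ℓ p)).ord →
      ∀ c : Ordinal → P, (∀ i j, i ≤ j → j < ρ → les (c i) (c j)) →
        ∃ q : P, ∀ i < ρ, les (c i) q)
    -- `κ_{ℓ p}` can be made arbitrarily large below `κ_ω` by extending `p`:
    (hlarge : ∀ p : P, ∀ n : ℕ, ∃ q : P, le p q ∧ n ≤ ℓ q)
    -- strong Prikry property: for dense open `D` there is a direct extension `q` such that the
    -- (fewer than `κ_ω` many) extensions of `q` by tuples from the measure-one sets all lie in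
    -- `D`, and they are predense above `q`:
    (hSP : ∀ D : Set P, (∀ p q, p ∈ D → le p q → q ∈ D) → (∀ p, ∃ q, le p q ∧ q ∈ D) →
      ∀ p : P, ∃ q : P, les p q ∧ ∃ T : Set P, T ⊆ D ∧ (∀ t ∈ T, le q t) ∧
        Cardinal.mk T < (⨆ n, κ n) ∧
        ∀ r, le q r → ∃ t ∈ T, ∃ s, le t s ∧ le r s)
    -- `R` is a name for a function from `ρ` to `κ_ω⁺`:
    (ρ : Ordinal) (hρ : ρ < (⨆ n, κ n).ord)
    (R : Ordinal → P → Ordinal → Prop)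
    (hmonoR : ∀ i p q β, R i p β → le p q → R i q β)
    (hval : ∀ i p β β', R i p β → R i p β' → β = β')
    (hbound : ∀ i p β, R i p β → β < (Order.succ (⨆ n, κ n)).ord)
    (hdense : ∀ i < ρ, ∀ p, ∃ q, le p q ∧ ∃ β, R i q β)
    (p : P) :
    ∃ q, le p q ∧ ∃ b < (Order.succ (⨆ n, κ n)).ord,
      ∀ i < ρ, ∀ r, le q r → ∀ β, R i r β → β < b :=
  prikry_preserves_successor_general P le les htrans hsrefl hstrans hsub κ hreg hmono ℓ hclosed
    hlarge hSP ρ hρ R hmonoR hval hbound hdense p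
end
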